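/- arXiv:1307.7534 — 2 statements merged into one kernel-verified Lean document; each statement's English description precedes it below -/
import Mathlib

section
/- If B is a 1-DeepLLL reduced basis (size-reduced and ‖π_k(b_k)‖² ≤ ‖π_k(b_ℓ)‖² for all k < ℓ), then B is 1-PotLLL reduced, i.e., Pot(B) ≤ Pot(σ_{k,ℓ} B) for all 1 ≤ k < ℓ ≤ n. -/
open Finset

/-- π_j : orthogonal projection onto the orthogonal complement of span{b_0,…,b_{j-1}}. -/
noncomputable def projPerp {n m : ℕ} (b : Fin n → EuclideanSpace ℝ (Fin m)) (j : ℕ)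
    (x : EuclideanSpace ℝ (Fin m)) : EuclideanSpace ℝ (Fin m) :=
  x - (Submodule.orthogonalProjectionOnto (Submodule.span ℝ (b '' {i | (i : ℕ) < j})) x : EuclideanSpace ℝ (Fin m))

/-- The Gram–Schmidt vector b_i^* = π_i(b_i). -/
noncomputable def bstar {n m : ℕ} (b : Fin n → EuclideanSpace ℝ (Fin m)) (i : Fin n) :
    EuclideanSpace ℝ (Fin m) :=
  projPerp b i.val (b i)

/-- The potential Pot(B) = ∏ ‖b_i^*‖^{2(n-i+1)} (1-based), i.e. ∏ ‖b_i^*‖^{2(n-i)} (0-based). -/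
noncomputable def Pot {n m : ℕ} (b : Fin n → EuclideanSpace ℝ (Fin m)) : ℝ :=
  ∏ i : Fin n, ‖bstar b i‖ ^ (2 * (n - i.val))

/-- Gram–Schmidt coefficient μ_{i,j} = ⟨b_i, b_j^*⟩ / ⟨b_j^*, b_j^*⟩. -/
noncomputable def mu {n m : ℕ} (b : Fin n → EuclideanSpace ℝ (Fin m)) (i j : Fin n) : ℝ :=
  (inner ℝ (b i) (bstar b j) : ℝ) / (inner ℝ (bstar b j) (bstar b j) : ℝ)

/-- Size-reduced: |μ_{i,j}| ≤ 1/2 for all j < i. -/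
def SizeReduced {n m : ℕ} (b : Fin n → EuclideanSpace ℝ (Fin m)) : Prop :=
  ∀ i j : Fin n, j < i → |mu b i j| ≤ 1/2

/-- The deep-insertion reordering σ_{k,ℓ}B = [b_1,…,b_{k-1}, b_ℓ, b_k,…,b_{ℓ-1}, b_{ℓ+1},…,b_n]. -/
def insertFam {n : ℕ} {α : Type*} (b : Fin n → α) (k l : Fin n) : Fin n → α :=
  fun i => if i.val < k.val ∨ l.val < i.val then b i
    else if i = k then b l
    else b ⟨i.val - 1, lt_of_le_of_lt (Nat.sub_le _ _) i.isLt⟩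

/-!
`Pot(B)` is the product of the Gram determinants `d_p = ∏_{i<p} ‖b_i^*‖²` of the prefixes
`b_0, …, b_{p-1}`, `p = 1, …, n`. The prefixes of `σ_{k,ℓ}B` of length `p ≤ k` or `p > ℓ` span the
same spaces as those of `B`, so those `d_p` do not change. For `k ≤ j ≤ ℓ` the prefix of length
`j + 1` of `σ_{k,ℓ}B` consists of `b_0, …, b_{j-1}` and `b_ℓ`, whence
`d_{j+1}(σ_{k,ℓ}B) = d_j(B) ‖π_j(b_ℓ)‖² ≥ d_j(B) ‖π_j(b_j)‖² = d_{j+1}(B)` by the DeepLLL condition.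
The formula for `d_{j+1}(σ_{k,ℓ}B)` follows by induction on `j` from the invariance of the area of
the parallelogram spanned by two vectors under exchanging them in the Gram–Schmidt process.
-/

open Submodule RealInnerProductSpace

section Geometry

variable {E : Type*} [NormedAddCommGroup E] [InnerProductSpace ℝ E]

theorem sq_norm_mul_sq_norm_starProjection_orthogonal_singleton (u v : E) :
    ‖v‖ ^ 2 * ‖(ℝ ∙ v)ᗮ.starProjection u‖ ^ 2 = ‖u‖ ^ 2 * ‖v‖ ^ 2 - ⟪u, v⟫ ^ 2 := by
  rcases eq_or_ne v 0 with rfl | hv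
  · simp
  rw [starProjection_orthogonal_val, starProjection_singleton, norm_sub_sq_real,
    inner_smul_right, norm_smul, mul_pow, Real.norm_eq_abs, sq_abs, real_inner_comm v u,
    RCLike.ofReal_real_eq_id, id]
  field_simp
  ring

variable [FiniteDimensional ℝ E]

theorem starProjection_orthogonal_sup_singleton (K : Submodule ℝ E) (x y : E) :
    (K ⊔ ℝ ∙ y)ᗮ.starProjection x
      = (ℝ ∙ Kᗮ.starProjection y)ᗮ.starProjection (Kᗮ.starProjection x) := by
  set v := Kᗮ.starProjection y
  set w := (ℝ ∙ v)ᗮ.starProjection (Kᗮ.starProjection x)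
  have hv : v ∈ Kᗮ := starProjection_apply_mem _ _
  have hyv : y - v ∈ K := by simp [v]
  have hw : w ∈ Kᗮ := by
    simp only [w, starProjection_orthogonal_val, starProjection_singleton]
    exact sub_mem (sub_starProjection_mem_orthogonal x) (smul_mem _ _ hv)
  have hwv : w ∈ (ℝ ∙ v)ᗮ := starProjection_apply_mem _ _
  apply eq_starProjection_of_mem_orthogonal
  · rw [← inf_orthogonal]
    refine ⟨hw, mem_orthogonal_singleton_iff_inner_right.mpr ?_⟩
    have : y = v + (y - v) := by abel
    rw [this, inner_add_left, mem_orthogonal_singleton_iff_inner_right.mp hwv, hw _ hyv,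
      add_zero]
  · refine le_orthogonal_orthogonal _ ?_
    have hvmem : v ∈ K ⊔ ℝ ∙ y := by
      have : v = y - (y - v) := by abel
      rw [this]
      exact sub_mem (mem_sup_right (mem_span_singleton_self y)) (mem_sup_left hyv)
    have : x - w = K.starProjection x + (ℝ ∙ v).starProjection (Kᗮ.starProjection x) := by
      simp only [w, starProjection_orthogonal_val]; abel
    rw [this, starProjection_singleton]
    exact add_mem (mem_sup_left (starProjection_apply_mem _ _)) (smul_mem _ _ hvmem)

/-- Both sides are the Gram determinant of the projections of `x` and `y` orthogonally to `K`. -/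
theorem sq_norm_mul_sq_norm_starProjection_orthogonal_sup_comm (K : Submodule ℝ E) (x y : E) :
    ‖Kᗮ.starProjection y‖ ^ 2 * ‖(K ⊔ ℝ ∙ y)ᗮ.starProjection x‖ ^ 2
      = ‖Kᗮ.starProjection x‖ ^ 2 * ‖(K ⊔ ℝ ∙ x)ᗮ.starProjection y‖ ^ 2 := by
  rw [starProjection_orthogonal_sup_singleton, starProjection_orthogonal_sup_singleton,
    sq_norm_mul_sq_norm_starProjection_orthogonal_singleton,
    sq_norm_mul_sq_norm_starProjection_orthogonal_singleton, real_inner_comm]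
  ring

end Geometry

section InsertFam

variable {n : ℕ} {α : Type*} (b : Fin n → α) {k l : Fin n}

theorem insertFam_of_lt {i : Fin n} (hi : i < k) : insertFam b k l i = b i :=
  if_pos (Or.inl hi)

theorem insertFam_of_gt {i : Fin n} (hi : l < i) : insertFam b k l i = b i :=
  if_pos (Or.inr hi)

theorem insertFam_left (hkl : k ≤ l) : insertFam b k l k = b l := by
  simp [insertFam, not_lt.mpr hkl]

theorem insertFam_succ {j : ℕ} (hj : j + 1 < n) (hkj : k ≤ j) (hjl : j < l) :
    insertFam b k l ⟨j + 1, hj⟩ = b ⟨j, by omega⟩ := by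
  have hk : (⟨j + 1, hj⟩ : Fin n) ≠ k := by rw [Ne, Fin.ext_iff]; dsimp; omega
  have hmid : ¬(j + 1 < k ∨ l < j + 1) := by omega
  simp only [insertFam, hmid, hk, if_false]
  rfl

end InsertFam

section GramSchmidt

variable {n m : ℕ} (b : Fin n → EuclideanSpace ℝ (Fin m))

def prefixSpan {E : Type*} [AddCommGroup E] [Module ℝ E] (c : Fin n → E) (j : ℕ) :
    Submodule ℝ E :=
  span ℝ (c '' {i | (i : ℕ) < j})

theorem projPerp_eq_starProjection (j : ℕ) (x : EuclideanSpace ℝ (Fin m)) :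
    projPerp b j x = (prefixSpan b j)ᗮ.starProjection x := by
  rw [starProjection_orthogonal_val]
  rfl

theorem prefixSpan_succ {j : ℕ} (hj : j < n) :
    prefixSpan b (j + 1) = prefixSpan b j ⊔ ℝ ∙ b ⟨j, hj⟩ := by
  have : {i : Fin n | (i : ℕ) < j + 1} = insert (⟨j, hj⟩ : Fin n) {i : Fin n | (i : ℕ) < j} := by
    ext i; simp only [Set.mem_ofPred_eq, Set.mem_insert_iff, Fin.ext_iff]; omega
  rw [prefixSpan, this, Set.image_insert_eq, span_insert, sup_comm]
  rfl

variable {k l : Fin n}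

theorem prefixSpan_insertFam_of_le {j : ℕ} (hj : j ≤ k) :
    prefixSpan (insertFam b k l) j = prefixSpan b j := by
  unfold prefixSpan
  congr 1
  exact Set.image_congr fun i (hi : (i : ℕ) < j) => insertFam_of_lt b (by omega)

theorem prefixSpan_insertFam_succ {j : ℕ} (hkj : k ≤ j) (hjl : j ≤ l) :
    prefixSpan (insertFam b k l) (j + 1) = prefixSpan b j ⊔ ℝ ∙ b l := by
  induction j, hkj using Nat.le_induction with
  | base =>
    rw [prefixSpan_succ _ k.2, prefixSpan_insertFam_of_le b le_rfl, insertFam_left b hjl]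
  | succ j hkj ih =>
    rw [prefixSpan_succ _ (by omega), ih (by omega), insertFam_succ b (by omega) hkj (by omega),
      prefixSpan_succ b (by omega), sup_right_comm]

theorem prefixSpan_insertFam_of_gt (hkl : k < l) {j : ℕ} (hlj : l < j) (hjn : j ≤ n) :
    prefixSpan (insertFam b k l) j = prefixSpan b j := by
  induction j, hlj using Nat.le_induction with
  | base => rw [prefixSpan_insertFam_succ b hkl.le le_rfl, prefixSpan_succ b l.2]
  | succ j hlj ih =>
    rw [prefixSpan_succ _ (by omega), prefixSpan_succ b (by omega), ih (by omega),
      insertFam_of_gt b (show l < (⟨j, _⟩ : Fin n) from hlj)]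

theorem bstar_insertFam_of_lt {i : Fin n} (hi : i < k) : bstar (insertFam b k l) i = bstar b i := by
  rw [bstar, bstar, insertFam_of_lt b hi, projPerp_eq_starProjection, projPerp_eq_starProjection,
    prefixSpan_insertFam_of_le b hi.le]

theorem bstar_insertFam_of_gt (hkl : k < l) {i : Fin n} (hi : l < i) :
    bstar (insertFam b k l) i = bstar b i := by
  rw [bstar, bstar, insertFam_of_gt b hi, projPerp_eq_starProjection, projPerp_eq_starProjection,
    prefixSpan_insertFam_of_gt b hkl hi i.2.le]

theorem bstar_insertFam_left (hkl : k ≤ l) : bstar (insertFam b k l) k = projPerp b k (b l) := by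
  rw [bstar, insertFam_left b hkl, projPerp_eq_starProjection, projPerp_eq_starProjection,
    prefixSpan_insertFam_of_le b le_rfl]

/-- In the Gram–Schmidt process over the first `j` vectors, `σ_{k,ℓ}` orthogonalises `b_l` before
`b_j`; the area of the parallelogram spanned by the two vectors does not depend on the order. -/
theorem sq_norm_projPerp_mul_sq_norm_bstar_insertFam_succ {j : ℕ} (hj : j + 1 < n) (hkj : k ≤ j) (hjl : j < l) :
    ‖projPerp b j (b l)‖ ^ 2 * ‖bstar (insertFam b k l) ⟨j + 1, hj⟩‖ ^ 2
      = ‖bstar b ⟨j, by omega⟩‖ ^ 2 * ‖projPerp b (j + 1) (b l)‖ ^ 2 := by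
  simp only [bstar, projPerp_eq_starProjection]
  rw [insertFam_succ b hj hkj hjl, prefixSpan_insertFam_succ b hkj hjl.le,
    prefixSpan_succ b (by omega)]
  exact sq_norm_mul_sq_norm_starProjection_orthogonal_sup_comm _ _ _

end GramSchmidt

section Potential

variable {n m : ℕ}

/-- The Gram determinant `d_p` of `c_0, …, c_{p-1}`, as a product of Gram–Schmidt norms. -/
noncomputable def gramPrefix (c : Fin n → EuclideanSpace ℝ (Fin m)) (p : ℕ) : ℝ :=
  ∏ i : Fin n with i.val < p, ‖bstar c i‖ ^ 2

variable (c : Fin n → EuclideanSpace ℝ (Fin m))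

theorem gramPrefix_nonneg (p : ℕ) : 0 ≤ gramPrefix c p :=
  prod_nonneg fun _ _ => sq_nonneg _

theorem gramPrefix_succ {p : ℕ} (hp : p < n) :
    gramPrefix c (p + 1) = gramPrefix c p * ‖bstar c ⟨p, hp⟩‖ ^ 2 := by
  have : ({i | i.val < p + 1} : Finset (Fin n))
      = insert (⟨p, hp⟩ : Fin n) ({i | i.val < p} : Finset (Fin n)) := by
    ext i; simp only [mem_filter, mem_univ, true_and, mem_insert, Fin.ext_iff]; omega
  rw [gramPrefix, this, prod_insert (by simp), mul_comm]
  rfl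

theorem pot_eq_prod_gramPrefix : Pot c = ∏ p : Fin n, gramPrefix c (p + 1) := by
  have hswap : ∏ p : Fin n, gramPrefix c (p + 1) = ∏ i : Fin n, ∏ _p ∈ Ici i, ‖bstar c i‖ ^ 2 :=
    prod_comm' fun p i => by
      simp only [mem_univ, mem_filter, mem_Ici, Fin.le_def, true_and, and_true]; omega
  simp only [hswap, prod_const, Fin.card_Ici, Pot, pow_mul]

variable {b : Fin n → EuclideanSpace ℝ (Fin m)} {k l : Fin n}

theorem gramPrefix_insertFam_of_le {p : ℕ} (hp : p ≤ k) :
    gramPrefix (insertFam b k l) p = gramPrefix b p :=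
  prod_congr rfl fun i hi => by
    simp only [mem_filter, mem_univ, true_and] at hi
    rw [bstar_insertFam_of_lt b (show (i : ℕ) < k by omega)]

theorem gramPrefix_insertFam_succ {j : ℕ} (hkj : k ≤ j) (hjl : j ≤ l) :
    gramPrefix (insertFam b k l) (j + 1) = gramPrefix b j * ‖projPerp b j (b l)‖ ^ 2 := by
  induction j, hkj using Nat.le_induction with
  | base =>
    rw [gramPrefix_succ _ k.2, gramPrefix_insertFam_of_le le_rfl, bstar_insertFam_left b hjl]
  | succ j hkj ih =>
    have hj : j + 1 < n := by omega
    rw [gramPrefix_succ _ hj, ih (by omega), mul_assoc,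
      sq_norm_projPerp_mul_sq_norm_bstar_insertFam_succ b hj hkj (by omega),
      gramPrefix_succ b (by omega), mul_assoc]

theorem gramPrefix_insertFam_of_gt (hkl : k < l) {p : ℕ} (hlp : l < p) (hpn : p ≤ n) :
    gramPrefix (insertFam b k l) p = gramPrefix b p := by
  induction p, hlp using Nat.le_induction with
  | base => rw [gramPrefix_insertFam_succ hkl.le le_rfl, gramPrefix_succ b l.2]; rfl
  | succ p hlp ih =>
    rw [gramPrefix_succ _ (by omega), gramPrefix_succ b (by omega), ih (by omega),
      bstar_insertFam_of_gt b hkl (show l < (⟨p, _⟩ : Fin n) from hlp)]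

theorem gramPrefix_le_gramPrefix_insertFam (hkl : k < l)
    (hdeep : ∀ i : Fin n, k ≤ i → i < l → ‖bstar b i‖ ^ 2 ≤ ‖projPerp b i (b l)‖ ^ 2)
    {p : ℕ} (hpn : p ≤ n) :
    gramPrefix b p ≤ gramPrefix (insertFam b k l) p := by
  rcases le_or_gt p k with hpk | hkp
  · exact (gramPrefix_insertFam_of_le hpk).ge
  rcases lt_or_ge (l : ℕ) p with hlp | hpl
  · exact (gramPrefix_insertFam_of_gt hkl hlp hpn).ge
  obtain ⟨j, rfl⟩ : ∃ j, p = j + 1 := ⟨p - 1, by omega⟩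
  rw [gramPrefix_insertFam_succ (by omega) (by omega), gramPrefix_succ b (by omega)]
  have hj : ‖bstar b ⟨j, by omega⟩‖ ^ 2 ≤ ‖projPerp b j (b l)‖ ^ 2 :=
    hdeep ⟨j, by omega⟩ (Fin.le_def.mpr (by dsimp; omega)) (Fin.lt_def.mpr (by dsimp; omega))
  exact mul_le_mul_of_nonneg_left hj (gramPrefix_nonneg b j)

end Potential

theorem deepLLL_one_is_potLLL_one_general {n m : ℕ} (b : Fin n → EuclideanSpace ℝ (Fin m))
    (hdeep : ∀ k l : Fin n, k < l →
      ‖projPerp b k.val (b k)‖ ^ 2 ≤ ‖projPerp b k.val (b l)‖ ^ 2) :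
    ∀ k l : Fin n, k < l → Pot b ≤ Pot (insertFam b k l) := by
  intro k l hkl
  rw [pot_eq_prod_gramPrefix, pot_eq_prod_gramPrefix]
  exact prod_le_prod (fun p _ => gramPrefix_nonneg b _) fun p _ =>
    gramPrefix_le_gramPrefix_insertFam hkl (fun i _ hil => hdeep i l hil) p.2

/-- a 1-DeepLLL reduced basis is 1-PotLLL reduced. -/
theorem deepLLL_one_is_potLLL_one {n m : ℕ} (b : Fin n → EuclideanSpace ℝ (Fin m))
    (hLI : LinearIndependent ℝ b)
    (hsize : SizeReduced b)
    (hdeep : ∀ k l : Fin n, k < l →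
      ‖projPerp b k.val (b k)‖ ^ 2 ≤ ‖projPerp b k.val (b l)‖ ^ 2) :
    ∀ k l : Fin n, k < l → Pot b ≤ Pot (insertFam b k l) :=
  deepLLL_one_is_potLLL_one_general b hdeep
end

section
/- A δ-LLL reduced basis B = [b_1,…,b_n] satisfies ‖b_1‖ ≤ (δ − 1/4)^{−(n−1)/2} · λ_1(L(B)), where λ_1(L) is the length of a shortest nonzero lattice vector. -/
open Finset

/-!
The Gram–Schmidt vectors `b*ᵢ` of a δ-LLL reduced basis decay at most geometrically: writing
`πₖ(bₖ₊₁) = b*ₖ₊₁ + μₖ₊₁,ₖ b*ₖ`, the Lovász condition and `|μₖ₊₁,ₖ| ≤ 1/2` give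
`(δ - 1/4) ‖b*ₖ‖² ≤ ‖b*ₖ₊₁‖²`, hence `(δ - 1/4)ʲ ‖b₁‖² ≤ ‖b*ⱼ‖²`. On the other hand every nonzero
lattice vector `v` satisfies `‖v‖ ≥ ‖b*ⱼ‖` for the largest index `j` it involves, since
`⟪v, b*ⱼ⟫ = zⱼ ‖b*ⱼ‖²` with `zⱼ` a nonzero integer.
-/

lemma le_rpow_neg_mul_of_pow_mul_sq_le {c a b : ℝ} (hc : 0 < c) (hb : 0 ≤ b) {N : ℕ}
    (h : c ^ N * a ^ 2 ≤ b ^ 2) : a ≤ c ^ (-((N : ℝ) / 2)) * b := by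
  set r := c ^ ((N : ℝ) / 2)
  have hr : 0 < r := Real.rpow_pos_of_pos hc _
  have hr2 : r ^ 2 = c ^ N := by
    rw [← Real.rpow_natCast r, ← Real.rpow_mul hc.le, ← Real.rpow_natCast]
    congr 1
    push_cast
    ring
  rw [Real.rpow_neg hc.le, ← div_eq_inv_mul, le_div_iff₀' hr]
  exact (abs_le_of_sq_le_sq' (by rwa [mul_pow, hr2]) hb).2

namespace LLL

variable {n m : ℕ} (b : Fin n → EuclideanSpace ℝ (Fin m))

noncomputable def prefixSpan (j : ℕ) : Submodule ℝ (EuclideanSpace ℝ (Fin m)) :=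
  Submodule.span ℝ (b '' {i | (i : ℕ) < j})

lemma prefixSpan_mono {j j' : ℕ} (h : j ≤ j') : prefixSpan b j ≤ prefixSpan b j' :=
  Submodule.span_mono (Set.image_mono fun _ hi => lt_of_lt_of_le hi h)

lemma mem_prefixSpan {i : Fin n} {j : ℕ} (h : (i : ℕ) < j) : b i ∈ prefixSpan b j :=
  Submodule.subset_span ⟨i, h, rfl⟩

lemma prefixSpan_succ {k : ℕ} (hk : k < n) :
    prefixSpan b (k + 1) = Submodule.span ℝ (insert (b ⟨k, hk⟩) (b '' {i | (i : ℕ) < k})) := by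
  have : {i : Fin n | (i : ℕ) < k + 1} = insert (⟨k, hk⟩ : Fin n) {i : Fin n | (i : ℕ) < k} := by
    ext i
    simp only [Set.mem_ofPred_eq, Set.mem_insert_iff, Fin.ext_iff]
    omega
  rw [prefixSpan, this, Set.image_insert_eq]

lemma projPerp_mem_orthogonal (j : ℕ) (x : EuclideanSpace ℝ (Fin m)) :
    projPerp b j x ∈ (prefixSpan b j)ᗮ :=
  (prefixSpan b j).sub_starProjection_mem_orthogonal x

lemma sub_projPerp_mem (j : ℕ) (x : EuclideanSpace ℝ (Fin m)) :
    x - projPerp b j x ∈ prefixSpan b j := by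
  rw [projPerp, sub_sub_cancel]
  exact ((prefixSpan b j).orthogonalProjectionOnto x).2

lemma projPerp_eq_of_sub_mem_of_mem_orthogonal {j : ℕ} {x y : EuclideanSpace ℝ (Fin m)}
    (hxy : x - y ∈ prefixSpan b j) (hy : y ∈ (prefixSpan b j)ᗮ) : projPerp b j x = y := by
  have : (prefixSpan b j).starProjection x = x - y :=
    Submodule.eq_starProjection_of_mem_of_inner_eq_zero hxy fun w hw => by
      simpa using Submodule.inner_left_of_mem_orthogonal hw hy
  change x - (prefixSpan b j).starProjection x = y
  rw [this, sub_sub_cancel]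

lemma bstar_mem_orthogonal (i : Fin n) : bstar b i ∈ (prefixSpan b i)ᗮ :=
  projPerp_mem_orthogonal b i (b i)

lemma bstar_mem_prefixSpan {i : Fin n} {j : ℕ} (h : (i : ℕ) < j) : bstar b i ∈ prefixSpan b j := by
  have := (prefixSpan b j).sub_mem (mem_prefixSpan b h)
    (prefixSpan_mono b h.le (sub_projPerp_mem b i (b i)))
  rwa [sub_sub_cancel] at this

lemma inner_bstar_eq_zero_of_mem {j : Fin n} {x : EuclideanSpace ℝ (Fin m)}
    (hx : x ∈ prefixSpan b j) : inner ℝ x (bstar b j) = 0 :=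
  Submodule.inner_right_of_mem_orthogonal hx (bstar_mem_orthogonal b j)

lemma inner_bstar_eq_norm_sq (j : Fin n) : inner ℝ (b j) (bstar b j) = ‖bstar b j‖ ^ 2 := by
  have h := inner_bstar_eq_zero_of_mem b (sub_projPerp_mem b j (b j))
  rw [inner_sub_left, ← bstar, real_inner_self_eq_norm_sq] at h
  linarith

lemma bstar_ne_zero (hLI : LinearIndependent ℝ b) (i : Fin n) : bstar b i ≠ 0 := by
  intro h
  have hmem := sub_projPerp_mem b i (b i)
  rw [← bstar, h, sub_zero] at hmem
  exact hLI.notMem_span_image (s := {j : Fin n | (j : ℕ) < i}) (by simp) hmem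

lemma bstar_mk_zero (hn : 0 < n) : bstar b ⟨0, hn⟩ = b ⟨0, hn⟩ :=
  projPerp_eq_of_sub_mem_of_mem_orthogonal b (by simp) (by simp [prefixSpan])

lemma projPerp_succ_eq (hLI : LinearIndependent ℝ b) {k : ℕ} (hk : k + 1 < n) :
    projPerp b k (b ⟨k + 1, hk⟩) =
      bstar b ⟨k + 1, hk⟩ + mu b ⟨k + 1, hk⟩ ⟨k, k.lt_succ_self.trans hk⟩ •
        bstar b ⟨k, k.lt_succ_self.trans hk⟩ := by
  set i : Fin n := ⟨k, k.lt_succ_self.trans hk⟩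
  set i' : Fin n := ⟨k + 1, hk⟩
  obtain ⟨a, z, hz, hdecomp⟩ : ∃ a : ℝ, ∃ z ∈ prefixSpan b k, b i' - bstar b i' = a • b i + z := by
    have := sub_projPerp_mem b (k + 1) (b i')
    rwa [prefixSpan_succ b i.2, Submodule.mem_span_insert] at this
  have hgs : b i - bstar b i ∈ prefixSpan b k := sub_projPerp_mem b k (b i)
  have hproj : projPerp b k (b i') = bstar b i' + a • bstar b i := by
    apply projPerp_eq_of_sub_mem_of_mem_orthogonal
    · have : b i' - (bstar b i' + a • bstar b i) = a • (b i - bstar b i) + z := by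
        rw [smul_sub, ← sub_sub, hdecomp]; abel
      rw [this]
      exact (prefixSpan b k).add_mem ((prefixSpan b k).smul_mem a hgs) hz
    · exact (prefixSpan b k)ᗮ.add_mem
        (Submodule.orthogonal_le (prefixSpan_mono b k.le_succ) (bstar_mem_orthogonal b i'))
        ((prefixSpan b k)ᗮ.smul_mem a (bstar_mem_orthogonal b i))
  have hinner : inner ℝ (b i') (bstar b i) = a * ‖bstar b i‖ ^ 2 := by
    have h₁ : inner ℝ (bstar b i') (bstar b i) = 0 := by
      rw [real_inner_comm]
      exact inner_bstar_eq_zero_of_mem b (bstar_mem_prefixSpan b k.lt_succ_self)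
    have h₂ : inner ℝ z (bstar b i) = 0 := inner_bstar_eq_zero_of_mem (j := i) b hz
    rw [sub_eq_iff_eq_add] at hdecomp
    rw [hdecomp, inner_add_left, inner_add_left, real_inner_smul_left, inner_bstar_eq_norm_sq, h₁,
      h₂]
    ring
  have hg : ‖bstar b i‖ ^ 2 ≠ 0 := pow_ne_zero 2 (norm_ne_zero_iff.mpr (bstar_ne_zero b hLI i))
  rw [hproj, mu, hinner, real_inner_self_eq_norm_sq, mul_div_cancel_right₀ _ hg]

lemma lovasz_step (hLI : LinearIndependent ℝ b) {δ : ℝ} (hsize : SizeReduced b) {k : ℕ}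
    (hk : k + 1 < n)
    (hlovasz : δ * ‖projPerp b k (b ⟨k, k.lt_succ_self.trans hk⟩)‖ ^ 2 ≤
      ‖projPerp b k (b ⟨k + 1, hk⟩)‖ ^ 2) :
    (δ - 1/4) * ‖bstar b ⟨k, k.lt_succ_self.trans hk⟩‖ ^ 2 ≤ ‖bstar b ⟨k + 1, hk⟩‖ ^ 2 := by
  set i : Fin n := ⟨k, k.lt_succ_self.trans hk⟩
  set i' : Fin n := ⟨k + 1, hk⟩
  have horth : inner ℝ (bstar b i') (mu b i' i • bstar b i) = 0 := by
    rw [real_inner_smul_right, real_inner_comm,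
      inner_bstar_eq_zero_of_mem b (bstar_mem_prefixSpan b k.lt_succ_self), mul_zero]
  have hpyth : ‖projPerp b k (b i')‖ ^ 2 = ‖bstar b i'‖ ^ 2 + mu b i' i ^ 2 * ‖bstar b i‖ ^ 2 := by
    rw [projPerp_succ_eq b hLI hk, norm_add_sq_real, horth, norm_smul, Real.norm_eq_abs, mul_pow,
      sq_abs]
    ring
  have hmu : mu b i' i ^ 2 ≤ 1/4 := by
    have := hsize i' i (Fin.mk_lt_mk.mpr k.lt_succ_self)
    nlinarith [abs_nonneg (mu b i' i), sq_abs (mu b i' i)]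
  rw [hpyth] at hlovasz
  change δ * ‖bstar b i‖ ^ 2 ≤ _ at hlovasz
  nlinarith [sq_nonneg ‖bstar b i‖]

lemma pow_mul_sq_norm_bstar_le (hLI : LinearIndependent ℝ b) (hn : 0 < n) {δ : ℝ}
    (hδ : 1/4 ≤ δ) (hsize : SizeReduced b)
    (hlovasz : ∀ k : ℕ, (hk : k + 1 < n) →
      δ * ‖projPerp b k (b ⟨k, Nat.lt_of_succ_lt hk⟩)‖ ^ 2 ≤
        ‖projPerp b k (b ⟨k + 1, hk⟩)‖ ^ 2) :
    ∀ (j : ℕ) (hj : j < n), (δ - 1/4) ^ j * ‖bstar b ⟨0, hn⟩‖ ^ 2 ≤ ‖bstar b ⟨j, hj⟩‖ ^ 2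
  | 0, _ => by simp
  | j + 1, hj => calc
      (δ - 1/4) ^ (j + 1) * ‖bstar b ⟨0, hn⟩‖ ^ 2
          = (δ - 1/4) * ((δ - 1/4) ^ j * ‖bstar b ⟨0, hn⟩‖ ^ 2) := by ring
      _ ≤ (δ - 1/4) * ‖bstar b ⟨j, j.lt_succ_self.trans hj⟩‖ ^ 2 :=
        mul_le_mul_of_nonneg_left (pow_mul_sq_norm_bstar_le hLI hn hδ hsize hlovasz j _)
          (by linarith)
      _ ≤ ‖bstar b ⟨j + 1, hj⟩‖ ^ 2 := lovasz_step b hLI hsize hj (hlovasz j hj)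

lemma inner_linearCombination_bstar {z : Fin n →₀ ℤ} {j : Fin n} (hz : ∀ i ∈ z.support, i ≤ j) :
    inner ℝ (z.sum fun i c => c • b i) (bstar b j) = z j * ‖bstar b j‖ ^ 2 := by
  rw [Finsupp.sum, sum_inner]
  simp_rw [← Int.cast_smul_eq_zsmul ℝ, real_inner_smul_left]
  rw [Finset.sum_eq_single j]
  · rw [inner_bstar_eq_norm_sq]
  · intro i hi hij
    have hij' : i < j := lt_of_le_of_ne (hz i hi) hij
    rw [inner_bstar_eq_zero_of_mem b (mem_prefixSpan b hij'), mul_zero]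
  · intro hj
    rw [Finsupp.notMem_support_iff.mp hj, Int.cast_zero, zero_mul]

lemma exists_norm_bstar_le_of_mem_span_int (hLI : LinearIndependent ℝ b)
    {v : EuclideanSpace ℝ (Fin m)} (hv : v ∈ Submodule.span ℤ (Set.range b)) (hv0 : v ≠ 0) :
    ∃ j : Fin n, ‖bstar b j‖ ≤ ‖v‖ := by
  obtain ⟨z, rfl⟩ := Finsupp.mem_span_range_iff_exists_finsupp.mp hv
  have hsupp : z.support.Nonempty := by
    rw [Finset.nonempty_iff_ne_empty, Ne, Finsupp.support_eq_empty]
    rintro rfl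
    simp at hv0
  set j := z.support.max' hsupp
  refine ⟨j, ?_⟩
  have hzj : (1 : ℝ) ≤ |(z j : ℝ)| := by
    exact_mod_cast Int.one_le_abs (Finsupp.mem_support_iff.mp (z.support.max'_mem hsupp))
  have hg : 0 < ‖bstar b j‖ := norm_pos_iff.mpr (bstar_ne_zero b hLI j)
  have : ‖bstar b j‖ * ‖bstar b j‖ ≤ ‖z.sum fun i c => c • b i‖ * ‖bstar b j‖ := calc
    ‖bstar b j‖ * ‖bstar b j‖ ≤ |(z j : ℝ)| * ‖bstar b j‖ ^ 2 := by nlinarith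
    _ = |inner ℝ (z.sum fun i c => c • b i) (bstar b j)| := by
        rw [inner_linearCombination_bstar b fun i hi => z.support.le_max' i hi, abs_mul,
          abs_of_nonneg (sq_nonneg ‖bstar b j‖)]
    _ ≤ _ := abs_real_inner_le_norm _ _
  exact le_of_mul_le_mul_right this hg

end LLL

/-- a δ-LLL reduced basis satisfies ‖b_1‖ ≤ (δ - 1/4)^{-(n-1)/2} · λ₁(L(B)),
stated as: ‖b_1‖ ≤ (δ - 1/4)^{-(n-1)/2}·‖v‖ for every nonzero lattice vector v. -/
theorem LLL_approx_svp {n m : ℕ} (hn : 0 < n) (b : Fin n → EuclideanSpace ℝ (Fin m))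
    (hLI : LinearIndependent ℝ b) (δ : ℝ) (hδ1 : 1/4 < δ) (hδ2 : δ ≤ 1)
    (hsize : SizeReduced b)
    (hlovasz : ∀ k : ℕ, (hk : k + 1 < n) →
      δ * ‖projPerp b k (b ⟨k, Nat.lt_of_succ_lt hk⟩)‖ ^ 2 ≤
        ‖projPerp b k (b ⟨k + 1, hk⟩)‖ ^ 2) :
    ∀ v ∈ Submodule.span ℤ (Set.range b), v ≠ 0 →
      ‖b ⟨0, hn⟩‖ ≤ (δ - 1/4) ^ (-(((n : ℝ) - 1) / 2)) * ‖v‖ := by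
  intro v hv hv0
  obtain ⟨j, hj⟩ := LLL.exists_norm_bstar_le_of_mem_span_int b hLI hv hv0
  have hc : 0 < δ - 1/4 := by linarith
  have key : (δ - 1/4) ^ (n - 1) * ‖b ⟨0, hn⟩‖ ^ 2 ≤ ‖v‖ ^ 2 := calc
    (δ - 1/4) ^ (n - 1) * ‖b ⟨0, hn⟩‖ ^ 2 ≤ (δ - 1/4) ^ (j : ℕ) * ‖b ⟨0, hn⟩‖ ^ 2 := by
        exact mul_le_mul_of_nonneg_right
          (pow_le_pow_of_le_one hc.le (by linarith) (Nat.le_sub_one_of_lt j.2)) (sq_nonneg _)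
    _ ≤ ‖bstar b j‖ ^ 2 := by
        simpa [LLL.bstar_mk_zero b hn] using
          LLL.pow_mul_sq_norm_bstar_le b hLI hn hδ1.le hsize hlovasz j j.2
    _ ≤ ‖v‖ ^ 2 := by gcongr
  simpa [Nat.cast_sub hn] using le_rpow_neg_mul_of_pow_mul_sq_le hc (norm_nonneg v) key
end
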